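/- For every $\epsilon > 0$, the number of pairs $(m_1, m_2)$ of positive integers with $m_1, m_2 \leq M$ such that $m_1 m_2$ is squarefull is $O_\epsilon(M^{1+\epsilon})$. -/

import Mathlib

/-!
Sending `(m₁, m₂)` to `(m₁ m₂, m₁)` shows that the pairs are at most `∑ d(n)` over squarefull
`n ≤ M²`. A squarefull `n` is `a² c` with `c` squarefree and `c ∣ a`, so `a ≤ M` and there are at
most `∑_{a ≤ M} d(a)` such `n`. With the divisor bound `d(n) ≪_δ n^δ` for `δ = ε/3` the count is
`≪ M^{1+δ} · M^{2δ}`. The divisor bound itself comes from `d(n) / n^δ = ∏_{p^e ∥ n} (e+1) / p^{eδ}`: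
a factor is at most `1` once `p^δ ≥ 2`, and is bounded in `e` for each of the finitely many
smaller `p`.
-/

/-- A positive integer is squarefull (powerful) if every prime dividing it does so to
at least the second power. -/
def IsSquarefull (n : ℕ) : Prop := ∀ p : ℕ, p.Prime → p ∣ n → p ^ 2 ∣ n

section

open Finset Real

lemma natCast_add_one_le_mul_pow {r : ℝ} (hr : 1 < r) (e : ℕ) :
    (e + 1 : ℝ) ≤ (1 + (log r)⁻¹) * r ^ e := by
  have hlog : 0 < log r := log_pos hr
  have hre : 1 ≤ r ^ e := one_le_pow₀ hr.le
  have hexp : e * log r + 1 ≤ r ^ e := by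
    simpa [← log_pow, exp_log (pow_pos (zero_lt_one.trans hr) e)] using
      add_one_le_exp (e * log r)
  have he : (e : ℝ) ≤ (log r)⁻¹ * r ^ e := by
    rw [inv_mul_eq_div, le_div_iff₀ hlog]; linarith
  nlinarith

lemma natCast_add_one_le_rpow {δ : ℝ} {p : ℕ} (hp : 2 ≤ (p : ℝ) ^ δ) (e : ℕ) :
    (e + 1 : ℝ) ≤ ((p : ℝ) ^ e) ^ δ :=
  calc (e + 1 : ℝ) ≤ 2 ^ e := by exact_mod_cast Nat.lt_two_pow_self
    _ ≤ ((p : ℝ) ^ δ) ^ e := pow_le_pow_left₀ zero_le_two hp e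
    _ = ((p : ℝ) ^ e) ^ δ := rpow_pow_comm p.cast_nonneg δ e

lemma prod_ite_lt_le_pow {s : Finset ℕ} {B : ℝ} (hB : 1 ≤ B) (K : ℕ) :
    ∏ p ∈ s, (if p < K then B else 1) ≤ B ^ K := by
  rw [prod_ite, prod_const, prod_const_one, mul_one]
  refine pow_le_pow_right₀ hB ((card_le_card fun p hp => ?_).trans (card_range K).le)
  exact mem_range.2 (mem_filter.1 hp).2

theorem exists_card_divisors_le_mul_rpow {δ : ℝ} (hδ : 0 < δ) :
    ∃ C : ℝ, 1 ≤ C ∧ ∀ n : ℕ, (#n.divisors : ℝ) ≤ C * (n : ℝ) ^ δ := by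
  have h2δ : 1 < (2 : ℝ) ^ δ := one_lt_rpow one_lt_two hδ
  set B := 1 + (log ((2 : ℝ) ^ δ))⁻¹
  have hB : 1 ≤ B := le_add_of_nonneg_right (inv_nonneg.2 (log_pos h2δ).le)
  set K := ⌈(2 : ℝ) ^ δ⁻¹⌉₊
  have hfactor : ∀ (p : ℕ), p.Prime → ∀ e : ℕ,
      (e + 1 : ℝ) ≤ (if p < K then B else 1) * ((p : ℝ) ^ e) ^ δ := by
    intro p hp e
    split_ifs with hpK
    · calc (e + 1 : ℝ) ≤ B * ((2 : ℝ) ^ δ) ^ e := natCast_add_one_le_mul_pow h2δ e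
        _ ≤ B * ((p : ℝ) ^ e) ^ δ := by
          rw [rpow_pow_comm zero_le_two]
          gcongr
          exact_mod_cast hp.two_le
    · rw [one_mul]
      refine natCast_add_one_le_rpow ?_ e
      calc (2 : ℝ) = ((2 : ℝ) ^ δ⁻¹) ^ δ := by
            rw [← rpow_mul zero_le_two, inv_mul_cancel₀ hδ.ne', rpow_one]
        _ ≤ (p : ℝ) ^ δ := by
          gcongr
          exact Nat.ceil_le.1 (not_lt.1 hpK)
  refine ⟨B ^ K, one_le_pow₀ hB, fun n => ?_⟩
  rcases eq_or_ne n 0 with rfl | hn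
  · simp [zero_rpow hδ.ne']
  calc (#n.divisors : ℝ) = ∏ p ∈ n.primeFactors, (n.factorization p + 1 : ℝ) := by
        rw [Nat.card_divisors hn]; push_cast; rfl
    _ ≤ ∏ p ∈ n.primeFactors, ((if p < K then B else 1) * ((p : ℝ) ^ n.factorization p) ^ δ) :=
        prod_le_prod (fun _ _ => by positivity)
          fun p hp => hfactor p (Nat.prime_of_mem_primeFactors hp) _
    _ = (∏ p ∈ n.primeFactors, if p < K then B else 1) * (n : ℝ) ^ δ := by
        rw [prod_mul_distrib, finsetProd_rpow _ _ (fun _ _ => by positivity)]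
        congr 2
        exact_mod_cast (Nat.prod_primeFactors_pow_factorization hn).symm
    _ ≤ B ^ K * (n : ℝ) ^ δ := by gcongr; exact prod_ite_lt_le_pow hB K

theorem IsSquarefull.exists_sq_mul_dvd {n : ℕ} (hn : n ≠ 0) (h : IsSquarefull n) :
    ∃ a c : ℕ, c ∣ a ∧ a ^ 2 * c = n := by
  obtain ⟨c, a, rfl, hc⟩ := Nat.sq_mul_squarefree n
  refine ⟨a, c, ?_, rfl⟩
  have ha : a ≠ 0 := pow_ne_zero_iff two_ne_zero |>.1 (left_ne_zero_of_mul hn)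
  rw [← Nat.prod_primeFactors_of_squarefree hc, Nat.prod_primeFactors_dvd_iff ha]
  intro p hpc
  have hp := Nat.prime_of_mem_primeFactors hpc
  refine (Nat.mem_primeFactors_of_ne_zero ha).2 ⟨hp, ?_⟩
  by_contra hpa
  -- `p² ∣ a² c` with `p ∤ a` forces `p² ∣ c`, against squarefreeness of `c`.
  have hp2 : p ^ 2 ∣ c :=
    (Nat.Coprime.pow 2 2 ((Nat.Prime.coprime_iff_not_dvd hp).2 hpa)).dvd_of_dvd_mul_left
      (h p hp (dvd_mul_of_dvd_right (Nat.dvd_of_mem_primeFactors hpc) _))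
  exact hp.one_lt.ne' (Nat.isUnit_iff.1 (hc p (by rwa [← sq])))

theorem card_filter_mul_le_sum_card_divisors (P : ℕ → Prop) [DecidablePred P] (M : ℕ) :
    #((Icc 1 M ×ˢ Icc 1 M).filter (fun mm : ℕ × ℕ => P (mm.1 * mm.2))) ≤
      ∑ n ∈ (Icc 1 (M ^ 2)).filter P, #n.divisors := by
  have hsub : (Icc 1 M ×ˢ Icc 1 M).filter (fun mm : ℕ × ℕ => P (mm.1 * mm.2)) ⊆
      ((Icc 1 (M ^ 2)).filter P).biUnion Nat.divisorsAntidiagonal := by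
    intro mm hmm
    simp only [mem_filter, mem_product, mem_Icc] at hmm
    obtain ⟨⟨⟨h1, h1M⟩, h2, h2M⟩, hP⟩ := hmm
    simp only [mem_biUnion, mem_filter, mem_Icc, Nat.mem_divisorsAntidiagonal]
    exact ⟨_, ⟨⟨Nat.one_le_iff_ne_zero.2 (by positivity), by nlinarith⟩, hP⟩, rfl, by positivity⟩
  refine (card_le_card hsub).trans (card_biUnion_le.trans_eq (sum_congr rfl fun n _ => ?_))
  rw [← Nat.map_div_right_divisors, card_map]

theorem card_filter_isSquarefull_le [DecidablePred IsSquarefull] (X : ℕ) :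
    #((Icc 1 X).filter IsSquarefull) ≤ ∑ a ∈ Icc 1 X.sqrt, #a.divisors := by
  have hsub : (Icc 1 X).filter IsSquarefull ⊆
      (Icc 1 X.sqrt).biUnion fun a => a.divisors.image (a ^ 2 * ·) := by
    intro n hn
    simp only [mem_filter, mem_Icc] at hn
    obtain ⟨⟨hn1, hnX⟩, hsq⟩ := hn
    obtain ⟨a, c, hca, rfl⟩ := hsq.exists_sq_mul_dvd (by omega)
    have hac : a ^ 2 * c ≠ 0 := by omega
    have ha : a ≠ 0 := pow_ne_zero_iff two_ne_zero |>.1 (left_ne_zero_of_mul hac)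
    simp only [mem_biUnion, mem_Icc, mem_image, Nat.mem_divisors]
    refine ⟨a, ⟨Nat.one_le_iff_ne_zero.2 ha, Nat.le_sqrt'.2 ?_⟩, c, ⟨hca, ha⟩, rfl⟩
    exact (Nat.le_mul_of_pos_right _ (Nat.pos_of_ne_zero (right_ne_zero_of_mul hac))).trans hnX
  exact (card_le_card hsub).trans (card_biUnion_le.trans (sum_le_sum fun a _ => card_image_le))

end

open scoped Classical in
/-- For every `ε > 0`, the number of ordered pairs `(m₁, m₂)` with `m₁, m₂ ≤ M` and
`m₁ m₂` squarefull is `O_ε(M^{1+ε})`. -/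
theorem stmt6 (ε : ℝ) (hε : 0 < ε) :
    ∃ C : ℝ, 0 < C ∧ ∀ M : ℕ, 1 ≤ M →
      (((Finset.Icc 1 M ×ˢ Finset.Icc 1 M).filter
          (fun mm => IsSquarefull (mm.1 * mm.2))).card : ℝ) ≤ C * (M : ℝ) ^ (1 + ε) := by
  open Finset Real in
  obtain ⟨C, hC, hdiv⟩ := exists_card_divisors_le_mul_rpow (by positivity : 0 < ε / 3)
  have hdiv_le (X n : ℕ) (h : n ≤ X) : (#n.divisors : ℝ) ≤ C * (X : ℝ) ^ (ε / 3) :=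
    (hdiv n).trans (by gcongr)
  refine ⟨C ^ 2, by positivity, fun M _ => ?_⟩
  set P := (Icc 1 (M ^ 2)).filter IsSquarefull
  have hP : (#P : ℝ) ≤ M * (C * (M : ℝ) ^ (ε / 3)) := calc
    (#P : ℝ) ≤ ∑ a ∈ Icc 1 M, (#a.divisors : ℝ) := by
      exact_mod_cast Nat.sqrt_eq' M ▸ card_filter_isSquarefull_le (M ^ 2)
    _ ≤ M * (C * (M : ℝ) ^ (ε / 3)) := by
      refine (sum_le_card_nsmul _ _ _ fun a ha => hdiv_le M a (mem_Icc.1 ha).2).trans_eq ?_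
      rw [nsmul_eq_mul, Nat.card_Icc, Nat.add_sub_cancel]
  calc _ ≤ ∑ n ∈ P, (#n.divisors : ℝ) := by
        exact_mod_cast card_filter_mul_le_sum_card_divisors IsSquarefull M
    _ ≤ #P * (C * ((M ^ 2 : ℕ) : ℝ) ^ (ε / 3)) := by
        refine (sum_le_card_nsmul P _ _ fun n hn => ?_).trans_eq (nsmul_eq_mul _ _)
        exact hdiv_le (M ^ 2) n (mem_Icc.1 (mem_filter.1 hn).1).2
    _ ≤ M * (C * (M : ℝ) ^ (ε / 3)) * (C * ((M ^ 2 : ℕ) : ℝ) ^ (ε / 3)) := by gcongr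
    _ = C ^ 2 * (M : ℝ) ^ (1 + ε) := by
        rw [Nat.cast_pow, ← rpow_pow_comm M.cast_nonneg,
          show 1 + ε = 1 + ε / 3 * (3 : ℕ) by push_cast; ring,
          rpow_add' M.cast_nonneg (by positivity), rpow_one, rpow_mul_natCast M.cast_nonneg]
        ring
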